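/- Let C be an additive category and M a multiplicative system in C. Then the localization C_M carries a preadditive structure making it an additive category (it has a zero object and finite biproducts) such that the localization functor L : C ⥤ C_M is an additive functor; moreover, for objects X, Y of C, the object L(X ⊕ Y), together with the images under L of the biproduct inclusions of X and Y, is a biproduct of L X and L Y in C_M. -/

import Mathlib

/-!
Fr1, Fr2, Fr4 and the left half of Fr3 give `M` a calculus of left fractions, so two
morphisms of `C_M` can be written over a common denominator and added there; this makes
`C_M` preadditive with `L` additive. An additive functor preserves biproducts, and `L` is
essentially surjective, so every finite family in `C_M` is, up to isomorphism, the image of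
a family in `C`, and the image of its biproduct is a biproduct in `C_M`.
-/

open CategoryTheory

/-- A multiplicative system in the sense of Definition `DefAppMult` (Fr1–Fr4). -/
structure IsMultiplicativeSystem {C : Type*} [Category C] (M : MorphismProperty C) : Prop where
  fr1 : ∀ X : C, M (𝟙 X)
  fr2 : ∀ ⦃X Y Z W : C⦄ (f : X ⟶ Y) (g : Y ⟶ Z) (h : Z ⟶ W),
    M (f ≫ g) → M (g ≫ h) → M f ∧ M g ∧ M h ∧ M (f ≫ g ≫ h)
  fr3 : ∀ ⦃X Y : C⦄ (f g : X ⟶ Y),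
    (∃ (X' : C) (s : X' ⟶ X), M s ∧ s ≫ f = s ≫ g) ↔
    (∃ (Y' : C) (t : Y ⟶ Y'), M t ∧ f ≫ t = g ≫ t)
  fr4 : ∀ ⦃X Y X' : C⦄ (s : X ⟶ Y) (f : X ⟶ X'), M s →
    ∃ (Y' : C) (s' : X' ⟶ Y') (f' : Y ⟶ Y'), M s' ∧ s ≫ f' = f ≫ s'
  fr4' : ∀ ⦃Y Y' X' : C⦄ (f' : Y ⟶ Y') (s' : X' ⟶ Y'), M s' →
    ∃ (X : C) (s : X ⟶ Y) (f : X ⟶ X'), M s ∧ s ≫ f' = f ≫ s'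

open CategoryTheory.Limits

namespace IsMultiplicativeSystem

variable {C : Type*} [Category C] {M : MorphismProperty C} (hM : IsMultiplicativeSystem M)
include hM

lemma isMultiplicative : M.IsMultiplicative where
  id_mem := hM.fr1
  comp_mem f g hf hg := by
    simpa using (hM.fr2 f (𝟙 _) g (by simpa) (by simpa)).2.2.2

lemma hasLeftCalculusOfFractions : M.HasLeftCalculusOfFractions :=
  have := hM.isMultiplicative
  { exists_leftFraction := fun _ _ φ => by
      obtain ⟨_, s', f', hs', h⟩ := hM.fr4 φ.s φ.f φ.hs
      exact ⟨⟨f', s', hs'⟩, h.symm⟩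
    ext := fun X' _ _ f₁ f₂ s hs h =>
      let ⟨Y', t, ht, h'⟩ := (hM.fr3 f₁ f₂).1 ⟨X', s, hs, h⟩
      ⟨Y', t, ht, h'⟩ }

end IsMultiplicativeSystem

theorem stmt_16_general {C : Type*} [Category C] [Preadditive C]
    [HasFiniteBiproducts C]
    (M : MorphismProperty C) (hM : IsMultiplicativeSystem M) :
    ∃ P : Preadditive M.Localization,
      HasZeroObject M.Localization ∧
      (letI := P; HasFiniteBiproducts M.Localization) ∧
      (letI := P; M.Q.Additive) ∧
      (letI : HasBinaryBiproducts C := hasBinaryBiproducts_of_finite_biproducts C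
       ∀ X Y : C, Nonempty (IsColimit (BinaryCofan.mk
        (M.Q.map (biprod.inl : X ⟶ X ⊞ Y)) (M.Q.map (biprod.inr : Y ⟶ X ⊞ Y))))) := by
  have := hM.hasLeftCalculusOfFractions
  have := Localization.essSurj M.Q M
  have := M.Q.hasFiniteProducts_of_additive_of_essSurj
  have : HasBinaryBiproducts C := hasBinaryBiproducts_of_finite_biproducts C
  have := preservesBinaryBiproducts_of_preservesBiproducts M.Q
  refine ⟨inferInstance, inferInstance, HasFiniteBiproducts.of_hasFiniteProducts, inferInstance,
    fun X Y => ⟨(isBinaryBilimitOfPreserves M.Q (BinaryBiproduct.isBilimit X Y)).isColimit⟩⟩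

/-- Remark `RemA2.(2)`: let `C` be an additive category and `M` a multiplicative system
in `C`. Then the localisation `C_M` carries a preadditive structure making it an
additive category (it has a zero object and finite biproducts) such that the
localisation functor `L = M.Q` is additive; moreover, for objects `X, Y` of `C`, the
object `L (X ⊞ Y)` together with the images under `L` of the biproduct inclusions is a
biproduct (coproduct) of `L X` and `L Y` in `C_M`. -/
theorem stmt_16 {C : Type*} [Category C] [Preadditive C] [HasZeroObject C]
    [HasFiniteBiproducts C]
    (M : MorphismProperty C) (hM : IsMultiplicativeSystem M) :
    ∃ P : Preadditive M.Localization,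
      HasZeroObject M.Localization ∧
      (letI := P; HasFiniteBiproducts M.Localization) ∧
      (letI := P; M.Q.Additive) ∧
      (letI : HasBinaryBiproducts C := hasBinaryBiproducts_of_finite_biproducts C
       ∀ X Y : C, Nonempty (IsColimit (BinaryCofan.mk
        (M.Q.map (biprod.inl : X ⟶ X ⊞ Y)) (M.Q.map (biprod.inr : Y ⟶ X ⊞ Y))))) :=
  stmt_16_general M hM
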